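/- Let K be a discretely valued field with valuation ring R and residue field k (not assumed perfect) of characteristic not equal to 2 or 3, and let E be an elliptic curve over K. Then the finite étale K-group scheme E[3] of 3-torsion points is tamely ramified with respect to R; that is, every residue field of the K-scheme E[3] is a finite separable extension of K which is tamely ramified (its ramification index is prime to char k and its residue extension is separable). -/

import Mathlib

open AlgebraicGeometry CategoryTheory CategoryTheory.Limits

universe u

noncomputable section

/-- A finite extension `L` of the fraction field `K` of a discrete valuation ring `R` is
tamely ramified if it is separable, the ramification index over `R` of every maximal ideal
of the integral closure of `R` in `L` is prime to the residue characteristic of `R`, and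
the residue field extensions are separable. -/
def IsTamelyRamifiedExtension (R : Type u) [CommRing R] [IsDomain R]
    [IsDiscreteValuationRing R] (K L : Type u) [Field K] [Field L] [Algebra R K]
    [IsFractionRing R K] [Algebra K L] [Algebra R L] [IsScalarTower R K L] : Prop :=
  FiniteDimensional K L ∧ Algebra.IsSeparable K L ∧
    ∀ Q : Ideal (integralClosure R L), Q.IsMaximal →
      (ringChar (IsLocalRing.ResidueField R) ≠ 0 →
        ¬ (ringChar (IsLocalRing.ResidueField R) ∣
          Ideal.ramificationIdx'
            (IsLocalRing.maximalIdeal R) Q)) ∧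
      ∃ h : IsLocalRing.maximalIdeal R ≤ Q.comap (algebraMap R (integralClosure R L)),
        letI : Algebra (R ⧸ IsLocalRing.maximalIdeal R) (integralClosure R L ⧸ Q) :=
          Ideal.Quotient.algebraQuotientOfLEComap h
        Algebra.IsSeparable (R ⧸ IsLocalRing.maximalIdeal R) (integralClosure R L ⧸ Q)


/-!
If `P = (x, y)` is a nonzero `3`-torsion point, then `2P = -P` forces `x` to be a root of the
`3`-division polynomial `ψ₃`, of degree `4`, while `y` satisfies the Weierstrass equation, a
quadratic over `K(x)`. So `K ⊆ K(x) ⊆ K(x, y)` has steps of degree at most `4` and `2`. In each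
step `e * f` is at most the degree, and `e`, `f` are multiplicative in towers, so the ramification
index and the inertia degree of every prime of `K(x, y)` are products of integers `≤ 4`, which are
invertible in `k` since `char k ≠ 2, 3`. An extension whose degree is invertible in the base
field is separable, its inseparable degree being a power of the characteristic; this gives the
separability of the residue extensions and, as `char K` is `0` or `char k`, of `K(x, y)/K`.
-/

open Polynomial Module IntermediateField IsLocalRing
open scoped Nat

theorem Nat.cast_ne_zero_of_factorial_ne_zero {k : Type*} [Semiring k] {m n : ℕ}
    (hn : (n ! : k) ≠ 0) (hm : 0 < m) (hmn : m ≤ n) : (m : k) ≠ 0 :=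
  ne_zero_of_dvd_ne_zero hn (Nat.cast_dvd_cast (Nat.dvd_factorial hm hmn))

theorem Nat.cast_ne_zero_of_mul_le_of_factorial_ne_zero {k : Type*} [Semiring k] {a b n : ℕ}
    (hn : (n ! : k) ≠ 0) (ha : 0 < a) (hb : 0 < b) (hab : a * b ≤ n) :
    (a : k) ≠ 0 ∧ (b : k) ≠ 0 :=
  ⟨Nat.cast_ne_zero_of_factorial_ne_zero hn ha ((Nat.le_mul_of_pos_right a hb).trans hab),
    Nat.cast_ne_zero_of_factorial_ne_zero hn hb ((Nat.le_mul_of_pos_left b ha).trans hab)⟩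

namespace Ideal

theorem ramificationIdx_mul_inertiaDeg_le_finrank {R S : Type*} [CommRing R] [IsDomain R]
    [CommRing S] [Algebra R S] [Module.Finite R S] [Module.Flat R S] (q : Ideal S) [q.IsPrime] :
    q.ramificationIdx R * q.inertiaDeg R ≤ finrank R S := by
  have := (Algebra.QuasiFinite.finite_primesOver (q.under R) (S := S)).fintype
  rw [← sum_ramification_inertia_eq_finrank (q.under R) S]
  exact Finset.single_le_sum (f := fun q : (q.under R).primesOver S ↦
      q.1.ramificationIdx R * q.1.inertiaDeg R)
    (fun _ _ ↦ Nat.zero_le _) (Finset.mem_univ (primesOver.mk (q.under R) q))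

theorem natCast_ramificationIdx_ne_zero_and_inertiaDeg_ne_zero_of_tower {R S T : Type*}
    [CommRing R] [IsDomain R] [CommRing S] [IsDomain S] [CommRing T] [Algebra R S] [Algebra S T]
    [Algebra R T] [IsScalarTower R S T] [Module.Finite R S] [Module.Flat R S] [Module.Finite S T]
    [Module.Flat S T] {k : Type*} [Semiring k] [NoZeroDivisors k]
    (h₀ : ((finrank R S)! : k) ≠ 0) (h₁ : ((finrank S T)! : k) ≠ 0)
    (Q : Ideal T) [Q.IsPrime] :
    (Q.ramificationIdx R : k) ≠ 0 ∧ (Q.inertiaDeg R : k) ≠ 0 := by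
  obtain ⟨he₀, hf₀⟩ := Nat.cast_ne_zero_of_mul_le_of_factorial_ne_zero h₀
    ((Q.under S).ramificationIdx_pos R) ((Q.under S).inertiaDeg_pos R)
    ((Q.under S).ramificationIdx_mul_inertiaDeg_le_finrank)
  obtain ⟨he₁, hf₁⟩ := Nat.cast_ne_zero_of_mul_le_of_factorial_ne_zero h₁
    (Q.ramificationIdx_pos S) (Q.inertiaDeg_pos S) Q.ramificationIdx_mul_inertiaDeg_le_finrank
  rw [ramificationIdx_tower (Q.under S) Q, inertiaDeg_tower (Q.under S) Q, Nat.cast_mul,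
    Nat.cast_mul]
  exact ⟨mul_ne_zero he₀ he₁, mul_ne_zero hf₀ hf₁⟩

end Ideal

theorem Nat.Prime.cast_ne_zero_of_ringChar_ne {k : Type*} [Ring k] [Nontrivial k] {p : ℕ}
    (hp : p.Prime) (h : ringChar k ≠ p) : (p : k) ≠ 0 := by
  rw [ne_eq, ringChar.spec]
  intro hdvd
  rcases (Nat.dvd_prime hp).mp hdvd with h1 | h1
  exacts [CharP.ringChar_ne_one h1, h h1]

theorem Algebra.IsSeparable.of_natCast_finrank_ne_zero {F E : Type*} [Field F] [Field E]
    [Algebra F E] [FiniteDimensional F E] (h : (finrank F E : F) ≠ 0) :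
    Algebra.IsSeparable F E := by
  obtain ⟨q, hq⟩ := ExpChar.exists F
  obtain ⟨n, hn⟩ := finInsepDegree_eq_pow F E q
  rw [isSeparable_iff_finInsepDegree_eq_one, hn]
  rcases hq with _ | ⟨hq⟩
  · exact one_pow n
  · cases n with
    | zero => rfl
    | succ n =>
      refine absurd ?_ h
      rw [← Field.finSepDegree_mul_finInsepDegree, hn, pow_succ, Nat.cast_mul, Nat.cast_mul,
        CharP.cast_eq_zero F q, mul_zero, mul_zero]

theorem IsFractionRing.natCast_ne_zero_of_residueField {R K : Type*} [CommRing R] [IsDomain R]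
    [IsLocalRing R] [Field K] [Algebra R K] [IsFractionRing R K] {n : ℕ}
    (h : (n : ResidueField R) ≠ 0) : (n : K) ≠ 0 := by
  rw [← map_natCast (algebraMap R K), ne_eq, map_eq_zero_iff _ (IsFractionRing.injective R K)]
  rintro hn
  exact h (by rw [← map_natCast (residue R), hn, map_zero])

theorem IsTamelyRamifiedExtension.of_natCast_ne_zero (R : Type u) [CommRing R] [IsDomain R]
    [IsDiscreteValuationRing R] (K L : Type u) [Field K] [Field L] [Algebra R K]
    [IsFractionRing R K] [Algebra K L] [Algebra R L] [IsScalarTower R K L]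
    [FiniteDimensional K L] [Algebra.IsSeparable K L]
    (h : ∀ Q : Ideal (integralClosure R L), Q.IsMaximal →
      (Q.ramificationIdx R : ResidueField R) ≠ 0 ∧ (Q.inertiaDeg R : ResidueField R) ≠ 0) :
    IsTamelyRamifiedExtension R K L := by
  have : IsDedekindDomain (integralClosure R L) := integralClosure.isDedekindDomain R K L
  have : Module.IsTorsionFree R L := .trans_faithfulSMul R K L
  have : Module.IsTorsionFree R (integralClosure R L) := IsIntegralClosure.isTorsionFree R L
  have : Module.Finite R (integralClosure R L) := IsIntegralClosure.finite R K L _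
  let : Field (R ⧸ maximalIdeal R) := Ideal.Quotient.field _
  refine ⟨‹_›, ‹_›, fun Q hQ ↦ ?_⟩
  obtain ⟨he, hf⟩ := h Q hQ
  have : Q.LiesOver (maximalIdeal R) :=
    ⟨(eq_maximalIdeal (Ideal.isMaximal_comap_of_isIntegral_of_isMaximal Q)).symm⟩
  refine ⟨fun _ hdvd ↦ he ?_, (Q.over_def (maximalIdeal R)).le, ?_⟩
  · rwa [ringChar.spec, ← Ideal.ramificationIdx'_eq_ramificationIdx _ _
      (IsDiscreteValuationRing.not_a_field R)]
  · let : Field (integralClosure R L ⧸ Q) := Ideal.Quotient.field Q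
    rw [← Ideal.inertiaDeg'_eq_inertiaDeg (maximalIdeal R) Q, Ideal.inertiaDeg'_algebraMap] at hf
    exact .of_natCast_finrank_ne_zero hf

theorem IsTamelyRamifiedExtension.of_tower (R : Type u) [CommRing R] [IsDomain R]
    [IsDiscreteValuationRing R] (K L₀ L : Type u) [Field K] [Field L₀] [Field L] [Algebra R K]
    [IsFractionRing R K] [Algebra K L₀] [Algebra L₀ L] [Algebra K L] [IsScalarTower K L₀ L]
    [Algebra R L] [IsScalarTower R K L] [FiniteDimensional K L₀] [FiniteDimensional L₀ L]
    (h₀ : ((finrank K L₀)! : ResidueField R) ≠ 0)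
    (h₁ : ((finrank L₀ L)! : ResidueField R) ≠ 0) :
    IsTamelyRamifiedExtension R K L := by
  have : FiniteDimensional K L := .trans K L₀ L
  have hdeg : (finrank K L : ResidueField R) ≠ 0 := by
    rw [← finrank_mul_finrank K L₀ L, Nat.cast_mul]
    exact mul_ne_zero (Nat.cast_ne_zero_of_factorial_ne_zero h₀ finrank_pos le_rfl)
      (Nat.cast_ne_zero_of_factorial_ne_zero h₁ finrank_pos le_rfl)
  have : Algebra.IsSeparable K L :=
    .of_natCast_finrank_ne_zero (IsFractionRing.natCast_ne_zero_of_residueField hdeg)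
  have : Algebra.IsSeparable K L₀ := Algebra.isSeparable_tower_bot_of_isSeparable K L₀ L
  let : Algebra R L₀ := ((algebraMap K L₀).comp (algebraMap R K)).toAlgebra
  have : IsScalarTower R K L₀ := .of_algebraMap_eq' rfl
  have : IsScalarTower R L₀ L := .of_algebraMap_eq fun r ↦ by
    rw [IsScalarTower.algebraMap_apply R K L, IsScalarTower.algebraMap_apply K L₀ L]; rfl
  set O₀ := integralClosure R L₀
  set O := integralClosure R L
  have : IsDedekindDomain O₀ := integralClosure.isDedekindDomain R K L₀
  have : IsFractionRing O₀ L₀ := integralClosure.isFractionRing_of_finite_extension K L₀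
  have : IsFractionRing O L := integralClosure.isFractionRing_of_finite_extension K L
  have : Module.Finite R O₀ := IsIntegralClosure.finite R K L₀ O₀
  have : Module.IsTorsionFree R L₀ := .trans_faithfulSMul R K L₀
  have : Module.IsTorsionFree R O₀ := IsIntegralClosure.isTorsionFree R L₀
  let : Algebra O₀ O := (IsScalarTower.toAlgHom R L₀ L).mapIntegralClosure.toAlgebra
  have : IsScalarTower R O₀ O := .of_algHom _
  have : IsScalarTower O₀ O L := .of_algebraMap_eq fun _ ↦ rfl
  have : Module.Finite R O := IsIntegralClosure.finite R K L O
  have : Module.Finite O₀ O := .of_restrictScalars_finite R O₀ O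
  have : FaithfulSMul O₀ O := (faithfulSMul_iff_algebraMap_injective O₀ O).mpr fun a b hab ↦
    Subtype.ext ((algebraMap L₀ L).injective (congrArg Subtype.val hab))
  rw [IsFractionRing.finrank_eq R K O₀ L₀] at h₀
  rw [IsFractionRing.finrank_eq O₀ L₀ O L] at h₁
  exact .of_natCast_ne_zero R K L fun Q _ ↦
    Ideal.natCast_ramificationIdx_ne_zero_and_inertiaDeg_ne_zero_of_tower h₀ h₁ Q

/- The `R`-algebra structure is the composite one used in the main theorem; it is not
definitionally the instance `IntermediateField.algebra'`. -/
theorem IsTamelyRamifiedExtension.of_restrictScalars (R : Type u) [CommRing R] [IsDomain R]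
    [IsDiscreteValuationRing R] {K F : Type u} [Field K] [Field F] [Algebra R K]
    [IsFractionRing R K] [Algebra K F] {L₀ : IntermediateField K F} (L : IntermediateField L₀ F)
    [FiniteDimensional K L₀] [FiniteDimensional L₀ L]
    (h₀ : ((finrank K L₀)! : ResidueField R) ≠ 0)
    (h₁ : ((finrank L₀ L)! : ResidueField R) ≠ 0) :
    letI : Algebra R (L.restrictScalars K) :=
      ((algebraMap K (L.restrictScalars K)).comp (algebraMap R K)).toAlgebra
    letI : IsScalarTower R K (L.restrictScalars K) := .of_algebraMap_eq fun _ ↦ rfl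
    IsTamelyRamifiedExtension R K (L.restrictScalars K) := by
  let : Algebra R L := ((algebraMap K L).comp (algebraMap R K)).toAlgebra
  have : IsScalarTower R K L := .of_algebraMap_eq fun _ ↦ rfl
  exact .of_tower R K L₀ L h₀ h₁

namespace WeierstrassCurve.Affine.Point

theorem eval_Ψ₃_eq_zero_of_three_smul_eq_zero {F : Type*} [Field F] [DecidableEq F]
    {W : WeierstrassCurve.Affine F} {x y : F} {h : W.Nonsingular x y}
    (h3 : 3 • some x y h = 0) : W.Ψ₃.eval x = 0 := by
  have h2 : some x y h + some x y h = -some x y h := by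
    rw [succ_nsmul, two_nsmul] at h3
    exact eq_neg_of_add_eq_zero_left h3
  have hy : y ≠ W.negY x y := fun hy ↦ some_ne_zero h <| by
    rw [← neg_eq_zero, ← h2, add_self_of_Y_eq hy]
  rw [add_self_of_Y_ne' hy, neg_inj] at h2
  have hx : W.addX x x (W.slope x x y y) = x := by injection h2
  have hd : y - W.negY x y ≠ 0 := sub_ne_zero.mpr hy
  have heq := (W.equation_iff x y).mp h.1
  rw [addX, slope_of_Y_ne rfl hy] at hx
  field_simp at hx
  rw [negY] at hx
  simp only [Ψ₃, b₂, b₄, b₆, b₈, eval_add, eval_mul, eval_pow, eval_X, eval_C,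
    eval_ofNat]
  -- `x(2P) = x(P)` with denominators cleared is `-ψ₃(x)` once `y²` is eliminated.
  linear_combination (-1 : F) * hx - (W.a₁ ^ 2 + 4 * W.a₂ + 12 * x) * heq

end WeierstrassCurve.Affine.Point

theorem IntermediateField.finrank_adjoin_simple_le_natDegree {K F : Type*} [Field K] [Field F]
    [Algebra K F] {α : F} {p : K[X]} (hp : p ≠ 0) (hα : aeval α p = 0) :
    finrank K K⟮α⟯ ≤ p.natDegree := by
  rw [adjoin.finrank (IsAlgebraic.isIntegral ⟨p, hp, hα⟩)]
  exact natDegree_le_natDegree (minpoly.degree_le_of_ne_zero K α hp hα)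

namespace WeierstrassCurve

variable {K F : Type*} [Field K] [Field F] [Algebra K F] (W : WeierstrassCurve K)

theorem finrank_adjoin_X_le_four [DecidableEq F] (h3 : (3 : K) ≠ 0) {x y : F}
    {h : (W.baseChange F).toAffine.Nonsingular x y} (htors : 3 • Affine.Point.some x y h = 0) :
    finrank K K⟮x⟯ ≤ 4 := by
  refine (finrank_adjoin_simple_le_natDegree (W.Ψ₃_ne_zero h3) ?_).trans W.natDegree_Ψ₃_le
  rw [aeval_def, eval₂_eq_eval_map, ← map_Ψ₃]
  exact Affine.Point.eval_Ψ₃_eq_zero_of_three_smul_eq_zero htors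

theorem finrank_adjoin_Y_le_two {x y : F} (h : (W.baseChange F).toAffine.Equation x y) :
    finrank K⟮x⟯ K⟮x⟯⟮y⟯ ≤ 2 := by
  let W₀ := W.baseChange K⟮x⟯
  let x₀ := AdjoinSimple.gen K x
  let p : K⟮x⟯[X] := X ^ 2 + C (W₀.a₁ * x₀ + W₀.a₃) * X
    - C (x₀ ^ 3 + W₀.a₂ * x₀ ^ 2 + W₀.a₄ * x₀ + W₀.a₆)
  have hp : p.natDegree = 2 := by unfold p; compute_degree!
  refine hp ▸ finrank_adjoin_simple_le_natDegree (fun h0 ↦ by simp [h0] at hp) ?_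
  have := (Affine.equation_iff x y).mp h
  simp only [p, W₀, x₀, map_add, map_sub, map_mul, map_pow, aeval_X, aeval_C,
    AdjoinSimple.algebraMap_gen, baseChange, map_a₁, map_a₂, map_a₃, map_a₄, map_a₆,
    ← IsScalarTower.algebraMap_apply] at this ⊢
  linear_combination this

end WeierstrassCurve

open Classical in
theorem three_torsion_tamely_ramified_general
    (R : Type u) [CommRing R] [IsDomain R] [IsDiscreteValuationRing R]
    (hchar2 : ringChar (IsLocalRing.ResidueField R) ≠ 2)
    (hchar3 : ringChar (IsLocalRing.ResidueField R) ≠ 3)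
    (Ec : WeierstrassCurve (FractionRing R))
    (x y : AlgebraicClosure (FractionRing R))
    (h : (Ec.baseChange (AlgebraicClosure (FractionRing R))).toAffine.Nonsingular x y)
    (htors : 3 • (WeierstrassCurve.Affine.Point.some x y h) = 0) :
    letI : Algebra R
        (IntermediateField.adjoin (FractionRing R)
          {x, y} : IntermediateField (FractionRing R) (AlgebraicClosure (FractionRing R))) :=
      ((algebraMap (FractionRing R) (IntermediateField.adjoin (FractionRing R)
          ({x, y} : Set (AlgebraicClosure (FractionRing R))))).comp
        (algebraMap R (FractionRing R))).toAlgebra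
    letI : IsScalarTower R (FractionRing R)
        (IntermediateField.adjoin (FractionRing R)
          ({x, y} : Set (AlgebraicClosure (FractionRing R)))) :=
      IsScalarTower.of_algebraMap_eq fun _ => rfl
    IsTamelyRamifiedExtension R (FractionRing R)
      (IntermediateField.adjoin (FractionRing R)
        ({x, y} : Set (AlgebraicClosure (FractionRing R)))) := by
  have h2 := Nat.prime_two.cast_ne_zero_of_ringChar_ne hchar2
  have h3 := Nat.prime_three.cast_ne_zero_of_ringChar_ne hchar3
  have hsmall : ∀ n ≤ 4, (n ! : ResidueField R) ≠ 0 := fun n hn ↦ by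
    have h24 : ((4 ! : ℕ) : ResidueField R) = (2 : ℕ) ^ 3 * (3 : ℕ) := by
      norm_num [Nat.factorial]
    exact ne_zero_of_dvd_ne_zero (h24 ▸ mul_ne_zero (pow_ne_zero 3 h2) h3)
      (Nat.cast_dvd_cast (Nat.factorial_dvd_factorial hn))
  have hx := Ec.finrank_adjoin_X_le_four
    (by exact_mod_cast IsFractionRing.natCast_ne_zero_of_residueField h3) htors
  have hy := Ec.finrank_adjoin_Y_le_two h.1
  have : FiniteDimensional (FractionRing R) (FractionRing R)⟮x⟯ :=
    adjoin.finiteDimensional (Algebra.IsIntegral.isIntegral x)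
  have : FiniteDimensional (FractionRing R)⟮x⟯ (FractionRing R)⟮x⟯⟮y⟯ :=
    adjoin.finiteDimensional (Algebra.IsIntegral.isIntegral y)
  rw [← adjoin_simple_adjoin_simple]
  exact .of_restrictScalars R _ (hsmall _ hx) (hsmall _ (hy.trans (by norm_num)))

open Classical in
/-- **Lemma 5.1.** Let `K` be a discretely valued field with valuation ring `R` whose
residue field (not assumed perfect) has characteristic not equal to `2` or `3`, and let
`E` be an elliptic curve over `K`. Then the `3`-torsion of `E` is tamely ramified with
respect to `R`: for every geometric `3`-torsion point `P ≠ 0`, with coordinates `x`, `y`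
in the algebraic closure of `K`, the field `K(x,y)` (the residue field of the
corresponding point of the `K`-scheme `E[3]`) is a finite separable tamely ramified
extension of `K`. -/
theorem three_torsion_tamely_ramified
    (R : Type u) [CommRing R] [IsDomain R] [IsDiscreteValuationRing R]
    (hchar2 : ringChar (IsLocalRing.ResidueField R) ≠ 2)
    (hchar3 : ringChar (IsLocalRing.ResidueField R) ≠ 3)
    (Ec : WeierstrassCurve (FractionRing R)) (hΔ : IsUnit Ec.Δ)
    (x y : AlgebraicClosure (FractionRing R))
    (h : (Ec.baseChange (AlgebraicClosure (FractionRing R))).toAffine.Nonsingular x y)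
    (htors : 3 • (WeierstrassCurve.Affine.Point.some x y h) = 0) :
    letI : Algebra R
        (IntermediateField.adjoin (FractionRing R)
          {x, y} : IntermediateField (FractionRing R) (AlgebraicClosure (FractionRing R))) :=
      ((algebraMap (FractionRing R) (IntermediateField.adjoin (FractionRing R)
          ({x, y} : Set (AlgebraicClosure (FractionRing R))))).comp
        (algebraMap R (FractionRing R))).toAlgebra
    letI : IsScalarTower R (FractionRing R)
        (IntermediateField.adjoin (FractionRing R)
          ({x, y} : Set (AlgebraicClosure (FractionRing R)))) :=
      IsScalarTower.of_algebraMap_eq fun _ => rfl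
    IsTamelyRamifiedExtension R (FractionRing R)
      (IntermediateField.adjoin (FractionRing R)
        ({x, y} : Set (AlgebraicClosure (FractionRing R)))) :=
  three_torsion_tamely_ramified_general R hchar2 hchar3 Ec x y h htors
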